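/- arXiv:1211.6547 — 2 statements merged into one kernel-verified Lean document; each statement's English description precedes it below -/
import Mathlib

section
/- Fix t ∈ (0,1). Assume there exist a constant C > 0 and a neighborhood U ⊆ [0,1] of t such that μ_τ(A) ≤ C·m(A) for every Borel set A ⊆ X and every τ ∈ U, and assume m(e_t(G)^{ε₀}) < ∞ for some ε₀ > 0. Then the functions γ ↦ ℒ¹(I_t(γ) ∩ (t−ε, t+ε))/(2ε) converge to the constant function 1 in L¹(𝛄) as ε → 0⁺; that is, lim_{ε→0⁺} ∫_G |ℒ¹(I_t(γ) ∩ (t−ε, t+ε))/(2ε) − 1| 𝛄(dγ) = 0. -/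
open MeasureTheory Set Filter Metric

/-- Evaluation of a continuous curve `γ : C([0,1], X)` at a real time `τ`
(times outside `[0,1]` are clamped via `projIcc`; we only use `τ ∈ [0,1]`). -/
noncomputable def ev {X : Type*} [TopologicalSpace X] (τ : ℝ) (γ : C(unitInterval, X)) : X :=
  γ (Set.projIcc 0 1 zero_le_one τ)

/-- A curve `γ ∈ C([0,1], X)` is a constant-speed geodesic if
`d(γ_s, γ_τ) = |s - τ| · d(γ_0, γ_1)` for all `s, τ ∈ [0,1]`. -/
def IsCSGeodesic {X : Type*} [MetricSpace X] (γ : C(unitInterval, X)) : Prop :=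
  ∀ s τ : unitInterval, dist (γ s) (γ τ) = |(s : ℝ) - (τ : ℝ)| * dist (γ 0) (γ 1)

/-- The (topological) support of a Borel measure: the set of points all of whose
open neighborhoods have positive measure. -/
def mSupport {α : Type*} [TopologicalSpace α] [MeasurableSpace α]
    (μ : MeasureTheory.Measure α) : Set α :=
  {x | ∀ U : Set α, IsOpen U → x ∈ U → 0 < μ U}


open scoped ENNReal Topology

/-! Since the curves of `G` are geodesics of length at most `D`, every `γ ∈ G` stays within the
closed `Dε`-neighbourhood of `K = e_t(G)` for `|τ - t| < ε`. By Tonelli, the `L¹(P)` distance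
of the normalised visit measure to `1` is the average over `τ ∈ (t - ε, t + ε)` of
`P(γ ∈ G, γ_τ ∉ K) ≤ μ_τ(K^{Dε} \ K) ≤ C m(K^{Dε} \ K)`, and this tends to `0` with `ε`
because `K` is closed and `m(K^{ε₀}) < ∞`. -/

theorem abs_measureReal_inter_div_sub_one {α : Type*} [MeasurableSpace α] {μ : Measure α}
    {s I : Set α} (hs : NullMeasurableSet s μ) (hI : μ I ≠ ∞) (hI₀ : μ.real I ≠ 0) :
    |μ.real (s ∩ I) / μ.real I - 1| = μ.real (I \ s) / μ.real I := by
  have hsplit : μ.real (I ∩ s) + μ.real (I \ s) = μ.real I := measureReal_inter_add_sdiff₀ hs hI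
  have hneg : μ.real (I ∩ s) / μ.real I - 1 = -(μ.real (I \ s) / μ.real I) := by
    field_simp
    linarith
  rw [inter_comm, hneg, abs_neg, abs_of_nonneg (by positivity)]

theorem lintegral_measure_prodMk_preimage_inter_le {α β : Type*} [MeasurableSpace α]
    [MeasurableSpace β] {μ : Measure α} {ν : Measure β} [SFinite μ] [SFinite ν]
    {W : Set (α × β)} (hW : MeasurableSet W) {I : Set β} {B : ℝ≥0∞}
    (hB : ∀ b ∈ I, μ ((·, b) ⁻¹' W) ≤ B) :
    ∫⁻ a, ν (Prod.mk a ⁻¹' W ∩ I) ∂μ ≤ ν I * B :=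
  calc ∫⁻ a, ν (Prod.mk a ⁻¹' W ∩ I) ∂μ = μ.prod (ν.restrict I) W := by
        rw [Measure.prod_apply hW]
        simp_rw [Measure.restrict_apply (measurable_prodMk_left hW)]
    _ = ∫⁻ b in I, μ ((·, b) ⁻¹' W) ∂ν := Measure.prod_apply_symm hW
    _ ≤ ∫⁻ _ in I, B ∂ν := setLIntegral_mono measurable_const hB
    _ = ν I * B := by rw [setLIntegral_const, mul_comm]

theorem tendsto_measure_cthickening_sdiff_of_isClosed {α : Type*} [PseudoMetricSpace α]
    [MeasurableSpace α] [OpensMeasurableSpace α] {μ : Measure α} {K : Set α}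
    (hfin : ∃ R > 0, μ (cthickening R K) ≠ ∞) (hK : IsClosed K) :
    Tendsto (fun r => μ (cthickening r K \ K)) (𝓝 0) (𝓝 0) := by
  have hKfin : μ K ≠ ∞ :=
    hfin.elim fun _ hR => measure_ne_top_of_subset (self_subset_cthickening K) hR.2
  simp_rw [measure_sdiff (self_subset_cthickening K) hK.nullMeasurableSet hKfin]
  simpa using ENNReal.Tendsto.sub (tendsto_measure_cthickening_of_isClosed hfin hK)
    tendsto_const_nhds (Or.inr hKfin)

section Curves

variable {X : Type*} [MetricSpace X]

theorem continuous_ev_uncurry : Continuous fun p : C(unitInterval, X) × ℝ => ev p.2 p.1 :=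
  continuous_eval.comp
    (continuous_fst.prodMk ((continuous_projIcc (h := zero_le_one)).comp continuous_snd))

theorem continuous_ev (τ : ℝ) : Continuous (ev τ : C(unitInterval, X) → X) :=
  continuous_eval_const _

theorem IsCSGeodesic.dist_ev_ev {γ : C(unitInterval, X)} (hγ : IsCSGeodesic γ) {τ s : ℝ}
    (hτ : τ ∈ Icc (0 : ℝ) 1) (hs : s ∈ Icc (0 : ℝ) 1) :
    dist (ev τ γ) (ev s γ) = |τ - s| * dist (γ 0) (γ 1) := by
  rw [ev, ev, projIcc_of_mem _ hτ, projIcc_of_mem _ hs, hγ]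

theorem ev_mem_cthickening_ev_image {G : Set C(unitInterval, X)} {D r t τ : ℝ}
    (hgeo : ∀ γ ∈ G, IsCSGeodesic γ) (hD : ∀ γ ∈ G, dist (γ 0) (γ 1) ≤ D)
    (ht : t ∈ Icc (0 : ℝ) 1) (hτ : τ ∈ Icc (0 : ℝ) 1) (hτt : |τ - t| ≤ r)
    {γ : C(unitInterval, X)} (hγ : γ ∈ G) :
    ev τ γ ∈ cthickening (D * r) (ev t '' G) := by
  refine mem_cthickening_of_dist_le _ _ _ _ (mem_image_of_mem _ hγ) ?_
  rw [(hgeo γ hγ).dist_ev_ev hτ ht, mul_comm D]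
  exact mul_le_mul hτt (hD γ hγ) dist_nonneg ((abs_nonneg _).trans hτt)

/-- `I_t(γ)` of the paper is `visitTimes (ev t '' G) γ`. -/
def visitTimes (K : Set X) (γ : C(unitInterval, X)) : Set ℝ :=
  {τ | τ ∈ Icc (0 : ℝ) 1 ∧ ev τ γ ∈ K}

variable [MeasurableSpace X] [BorelSpace X]

theorem measurableSet_visitTimes {K : Set X} (hK : MeasurableSet K) (γ : C(unitInterval, X)) :
    MeasurableSet (visitTimes K γ) :=
  measurableSet_Icc.inter
    ((continuous_ev_uncurry.comp (continuous_const.prodMk continuous_id)).measurable hK)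

theorem abs_volume_visitTimes_inter_ball_div_sub_one {K : Set X} (hK : MeasurableSet K)
    {t ε : ℝ} (hε : 0 < ε) (hball : ball t ε ⊆ Icc (0 : ℝ) 1) (γ : C(unitInterval, X)) :
    |(volume (visitTimes K γ ∩ ball t ε)).toReal / (2 * ε) - 1|
      = (volume ({τ | ev τ γ ∉ K} ∩ ball t ε)).toReal / (2 * ε) := by
  have hvol : volume.real (ball t ε) = 2 * ε := Real.volume_real_ball hε.le
  have hexit : ball t ε \ visitTimes K γ = {τ | ev τ γ ∉ K} ∩ ball t ε := by
    ext τ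
    simp only [visitTimes, Set.mem_sdiff, mem_inter_iff, mem_ofPred_eq]
    exact ⟨fun h => ⟨fun hK => h.2 ⟨hball h.1, hK⟩, h.1⟩, fun h => ⟨h.2, fun h' => h.1 h'.2⟩⟩
  rw [← hvol, ← hexit]
  exact abs_measureReal_inter_div_sub_one (measurableSet_visitTimes hK γ).nullMeasurableSet
    measure_ball_lt_top.ne (by rw [hvol]; positivity)

variable [MeasurableSpace C(unitInterval, X)] [OpensMeasurableSpace C(unitInterval, X)]

theorem setIntegral_abs_visitTimes_density_sub_one_le {P : Measure C(unitInterval, X)}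
    [SFinite P] {G : Set C(unitInterval, X)} {D t ε : ℝ} {B : ℝ≥0∞}
    (hK : MeasurableSet (ev t '' G)) (hgeo : ∀ γ ∈ G, IsCSGeodesic γ)
    (hD : ∀ γ ∈ G, dist (γ 0) (γ 1) ≤ D) (hε : 0 < ε) (hball : ball t ε ⊆ Icc (0 : ℝ) 1)
    (hB : ∀ τ ∈ ball t ε, P (ev τ ⁻¹' (cthickening (D * ε) (ev t '' G) \ ev t '' G)) ≤ B)
    (hB_ne_top : B ≠ ∞) :
    ∫ γ in G, |(volume (visitTimes (ev t '' G) γ ∩ ball t ε)).toReal / (2 * ε) - 1| ∂P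
      ≤ B.toReal := by
  set K := ev t '' G
  set W : Set (C(unitInterval, X) × ℝ) := {p | ev p.2 p.1 ∉ K}
  have hW : MeasurableSet W := (continuous_ev_uncurry.measurable hK).compl
  have hslice : ∀ τ ∈ ball t ε, P.restrict G ((·, τ) ⁻¹' W) ≤ B := by
    intro τ hτ
    change P.restrict G (ev τ ⁻¹' K)ᶜ ≤ B
    rw [Measure.restrict_apply ((continuous_ev τ).measurable hK).compl]
    have hsub : (ev τ ⁻¹' K)ᶜ ∩ G ⊆ ev τ ⁻¹' (cthickening (D * ε) K \ K) := fun γ hγ =>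
      ⟨ev_mem_cthickening_ev_image hgeo hD (hball (mem_ball_self hε)) (hball hτ)
        (mem_ball.1 hτ).le hγ.2, hγ.1⟩
    exact (measure_mono hsub).trans (hB τ hτ)
  have hlint := lintegral_measure_prodMk_preimage_inter_le (μ := P.restrict G)
    (ν := volume) hW hslice
  have hmeas : Measurable fun γ => volume (Prod.mk γ ⁻¹' W ∩ ball t ε) := by
    simpa only [Measure.restrict_apply (measurable_prodMk_left hW)]
      using measurable_measure_prodMk_left (ν := volume.restrict (ball t ε)) hW
  have hfin : ∀ γ, volume (Prod.mk γ ⁻¹' W ∩ ball t ε) < ∞ := fun γ =>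
    (measure_mono inter_subset_right).trans_lt measure_ball_lt_top
  rw [integral_congr_ae (ae_of_all _ (abs_volume_visitTimes_inter_ball_div_sub_one hK hε hball)),
    integral_div, div_le_iff₀ (by positivity)]
  change ∫ γ in G, (volume (Prod.mk γ ⁻¹' W ∩ ball t ε)).toReal ∂P ≤ _
  rw [integral_toReal hmeas.aemeasurable (ae_of_all _ hfin)]
  calc (∫⁻ γ in G, volume (Prod.mk γ ⁻¹' W ∩ ball t ε) ∂P).toReal
      ≤ (volume (ball t ε) * B).toReal :=
        ENNReal.toReal_mono (ENNReal.mul_ne_top measure_ball_lt_top.ne hB_ne_top) hlint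
    _ = B.toReal * (2 * ε) := by
        rw [ENNReal.toReal_mul, ← measureReal_def, Real.volume_real_ball hε.le, mul_comm]

end Curves

theorem self_intersection_L1_density_one_general
    {X : Type*} [MetricSpace X]
    [MeasurableSpace X] [BorelSpace X]
    (m : MeasureTheory.Measure X)
    [MeasurableSpace C(unitInterval, X)] [BorelSpace C(unitInterval, X)]
    (P : MeasureTheory.Measure C(unitInterval, X)) [IsProbabilityMeasure P]
    (G : Set C(unitInterval, X))
    (hGcpt : IsCompact G) (hGgeo : ∀ γ ∈ G, IsCSGeodesic γ)
    (t : ℝ) (ht : t ∈ Set.Ioo (0 : ℝ) 1)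
    (C : ℝ)
    (U : Set ℝ) (hUsub : U ⊆ Set.Icc (0 : ℝ) 1) (hUnhds : U ∈ nhdsWithin t (Set.Icc (0 : ℝ) 1))
    (hdens : ∀ τ ∈ U, ∀ A : Set X, MeasurableSet A →
      MeasureTheory.Measure.map (ev τ) P A ≤ ENNReal.ofReal C * m A)
    (ε₀ : ℝ) (hε₀ : 0 < ε₀)
    (hfin : m (Metric.cthickening ε₀ (ev t '' G)) < ⊤) :
    Filter.Tendsto
      (fun ε : ℝ => ∫ γ in G,
        |(MeasureTheory.volume
            ({τ : ℝ | τ ∈ Set.Icc (0 : ℝ) 1 ∧ ev τ γ ∈ ev t '' G} ∩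
              Set.Ioo (t - ε) (t + ε))).toReal / (2 * ε) - 1| ∂P)
      (nhdsWithin 0 (Set.Ioi 0)) (nhds 0) := by
  set K := ev t '' G
  have hK : IsClosed K := (hGcpt.image (continuous_ev t)).isClosed
  obtain ⟨D, hD⟩ := hGcpt.bddAbove_image
    ((continuous_eval_const 0).dist (continuous_eval_const 1)).continuousOn
  have hΔ : ∀ r, MeasurableSet (cthickening r K \ K) := fun _ =>
    isClosed_cthickening.measurableSet.diff hK.measurableSet
  have hU : U ∈ 𝓝 t := by rwa [nhdsWithin_eq_nhds.2 (Icc_mem_nhds ht.1 ht.2)] at hUnhds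
  have hDε : Tendsto (fun ε => D * ε) (𝓝[>] 0) (𝓝 0) := by
    simpa using ((continuous_const_mul D).tendsto 0).mono_left nhdsWithin_le_nhds
  have hbound : Tendsto (fun ε => (ENNReal.ofReal C * m (cthickening (D * ε) K \ K)).toReal)
      (𝓝[>] 0) (𝓝 0) := by
    have h := ENNReal.Tendsto.const_mul
      ((tendsto_measure_cthickening_sdiff_of_isClosed ⟨ε₀, hε₀, hfin.ne⟩ hK).comp hDε)
      (Or.inr (ENNReal.ofReal_ne_top (r := C)))
    rw [mul_zero] at h
    exact (ENNReal.tendsto_toReal ENNReal.zero_ne_top).comp h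
  refine squeeze_zero' (Eventually.of_forall fun ε => integral_nonneg fun γ => abs_nonneg _) ?_
    hbound
  filter_upwards [self_mem_nhdsWithin, (eventually_ball_subset hU).filter_mono nhdsWithin_le_nhds,
    hDε.eventually (eventually_le_nhds hε₀)] with ε hε hεU hεε₀
  rw [← Real.ball_eq_Ioo]
  refine setIntegral_abs_visitTimes_density_sub_one_le hK.measurableSet hGgeo
    (fun γ hγ => hD (mem_image_of_mem _ hγ)) hε (hεU.trans hUsub) (fun τ hτ => ?_) ?_
  · rw [← Measure.map_apply (continuous_ev τ).measurable (hΔ _)]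
    exact hdens τ (hεU hτ) _ (hΔ _)
  · exact ENNReal.mul_ne_top ENNReal.ofReal_ne_top
      (measure_ne_top_of_subset (sdiff_subset.trans (cthickening_mono hεε₀ K)) hfin.ne)

/-- If near `t ∈ (0,1)` all the measures `μ_τ = (e_τ)_♯ P` have density
bounded by `C` w.r.t. `m`, and some closed `ε₀`-neighborhood of `e_t(G)` has finite
`m`-measure, then `γ ↦ ℒ¹(I_t(γ) ∩ (t - ε, t + ε)) / (2ε)` converges to the constant `1`
in `L¹(P)` as `ε → 0⁺`. -/
theorem self_intersection_L1_density_one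
    {X : Type*} [MetricSpace X] [CompleteSpace X] [TopologicalSpace.SeparableSpace X]
    [MeasurableSpace X] [BorelSpace X]
    (m : MeasureTheory.Measure X)
    [MeasurableSpace C(unitInterval, X)] [BorelSpace C(unitInterval, X)]
    (P : MeasureTheory.Measure C(unitInterval, X)) [IsProbabilityMeasure P]
    (G : Set C(unitInterval, X)) (hGsupp : G = mSupport P)
    (hGcpt : IsCompact G) (hGgeo : ∀ γ ∈ G, IsCSGeodesic γ)
    (t : ℝ) (ht : t ∈ Set.Ioo (0 : ℝ) 1)
    (C : ℝ) (hC : 0 < C)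
    (U : Set ℝ) (hUsub : U ⊆ Set.Icc (0 : ℝ) 1) (hUnhds : U ∈ nhdsWithin t (Set.Icc (0 : ℝ) 1))
    (hdens : ∀ τ ∈ U, ∀ A : Set X, MeasurableSet A →
      MeasureTheory.Measure.map (ev τ) P A ≤ ENNReal.ofReal C * m A)
    (ε₀ : ℝ) (hε₀ : 0 < ε₀)
    (hfin : m (Metric.cthickening ε₀ (ev t '' G)) < ⊤) :
    Filter.Tendsto
      (fun ε : ℝ => ∫ γ in G,
        |(MeasureTheory.volume
            ({τ : ℝ | τ ∈ Set.Icc (0 : ℝ) 1 ∧ ev τ γ ∈ ev t '' G} ∩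
              Set.Ioo (t - ε) (t + ε))).toReal / (2 * ε) - 1| ∂P)
      (nhdsWithin 0 (Set.Ioi 0)) (nhds 0) :=
  self_intersection_L1_density_one_general m P G hGcpt hGgeo t ht C U hUsub hUnhds hdens ε₀ hε₀ hfin
end

section
/- Fix t ∈ (0,1). Assume there exist a constant C > 0 and a neighborhood U ⊆ [0,1] of t such that μ_τ(A) ≤ C·m(A) for every Borel set A ⊆ X and every τ ∈ U, and assume m(e_t(G)^{ε₀}) < ∞ for some ε₀ > 0. Then for every sequence εₙ of positive reals converging to 0 there exists a 𝛄-null set H ⊆ G (which may depend on the sequence) such that for every γ ∈ G ∖ H one has limsup_{n→∞} ℒ¹(I_t(γ) ∩ (t−εₙ, t+εₙ))/(2εₙ) = 1. -/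
open MeasureTheory Set Filter Metric

open scoped Topology ENNReal

/-!
Geodesics in `G` move with speed at most some `D`, so at time `τ` every `γ ∈ G` lies within
`|τ - t| D` of `K = e_t(G)`. The density bound then gives
`𝛄{γ ∈ G : γ_τ ∉ K} ≤ C m(K^{|τ - t| D} \ K) → 0` as `τ → t`, because `m(K^r) ↓ m(K) < ∞`.
By Fubini, the ratios `F_n(γ) = ℒ¹(I_t(γ) ∩ (t - εₙ, t + εₙ)) / (2εₙ) ≤ 1` therefore satisfy
`liminf ∫_G F_n d𝛄 ≥ 𝛄(G)`, and the reverse Fatou lemma gives `∫_G limsup F_n d𝛄 ≥ 𝛄(G)`,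
which forces `limsup F_n = 1` almost everywhere on `G`.
-/

theorem tendsto_measure_cthickening_diff_of_isClosed {α : Type*} [PseudoMetricSpace α]
    [MeasurableSpace α] [OpensMeasurableSpace α] {μ : Measure α} {s : Set α}
    (hs : ∃ R > 0, μ (cthickening R s) ≠ ∞) (h's : IsClosed s) :
    Tendsto (fun r => μ (cthickening r s \ s)) (𝓝 0) (𝓝 0) := by
  obtain ⟨R, hR, hRfin⟩ := hs
  have hfin : μ s ≠ ∞ := ne_top_of_le_ne_top hRfin (measure_mono (self_subset_cthickening s))
  have h := ENNReal.Tendsto.sub (tendsto_measure_cthickening_of_isClosed ⟨R, hR, hRfin⟩ h's)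
    tendsto_const_nhds (Or.inr hfin)
  rw [tsub_self] at h
  exact h.congr fun r => (measure_sdiff (self_subset_cthickening s) h's.nullMeasurableSet hfin).symm

theorem IsCSGeodesic.dist_ev_le {X : Type*} [MetricSpace X] {γ : C(unitInterval, X)}
    (hγ : IsCSGeodesic γ) (τ s : ℝ) :
    dist (ev τ γ) (ev s γ) ≤ |τ - s| * dist (γ 0) (γ 1) := by
  rw [ev, ev, hγ]
  exact mul_le_mul_of_nonneg_right (abs_projIcc_sub_projIcc _) dist_nonneg

theorem tendsto_restrict_measure_ev_notMem_image {X : Type*} [MetricSpace X]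
    [MeasurableSpace X] [BorelSpace X] [MeasurableSpace C(unitInterval, X)]
    [BorelSpace C(unitInterval, X)] (m : Measure X) (P : Measure C(unitInterval, X))
    {G : Set C(unitInterval, X)} (hG : IsCompact G) (hgeo : ∀ γ ∈ G, IsCSGeodesic γ)
    {t : ℝ} {U : Set ℝ} (hU : U ∈ 𝓝 t) {c : ℝ≥0∞} (hc : c ≠ ∞)
    (hdens : ∀ τ ∈ U, ∀ A : Set X, MeasurableSet A → P.map (ev τ) A ≤ c * m A)
    (hfin : ∃ R > 0, m (cthickening R (ev t '' G)) ≠ ∞) :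
    Tendsto (fun τ => P.restrict G {γ | ev τ γ ∉ ev t '' G}) (𝓝 t) (𝓝 0) := by
  set K := ev t '' G
  have hK : IsClosed K := (hG.image (continuous_eval_const _)).isClosed
  obtain ⟨D, hD⟩ : ∃ D, ∀ γ ∈ G, dist (γ 0) (γ 1) ≤ D := by
    obtain ⟨D, hD⟩ := (hG.image (by fun_prop :
      Continuous fun γ : C(unitInterval, X) => dist (γ 0) (γ 1))).bddAbove
    exact ⟨D, fun γ hγ => hD (mem_image_of_mem _ hγ)⟩
  have hbound : ∀ τ ∈ U,
      P.restrict G {γ | ev τ γ ∉ K} ≤ c * m (cthickening (|τ - t| * D) K \ K) := by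
    intro τ hτ
    have hA : MeasurableSet (cthickening (|τ - t| * D) K \ K) :=
      isClosed_cthickening.measurableSet.diff hK.measurableSet
    calc P.restrict G {γ | ev τ γ ∉ K}
        ≤ P (ev τ ⁻¹' (cthickening (|τ - t| * D) K \ K)) := by
          rw [Measure.restrict_apply' hG.isClosed.measurableSet]
          refine measure_mono fun γ ⟨hγK, hγG⟩ => ⟨?_, hγK⟩
          refine mem_cthickening_of_dist_le _ _ _ _ (mem_image_of_mem _ hγG) ?_
          exact (hgeo γ hγG).dist_ev_le τ t |>.trans (by gcongr; exact hD γ hγG)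
      _ = P.map (ev τ) (cthickening (|τ - t| * D) K \ K) :=
          (Measure.map_apply (continuous_eval_const _).measurable hA).symm
      _ ≤ c * m (cthickening (|τ - t| * D) K \ K) := hdens τ hτ _ hA
  have hr : Tendsto (fun τ => |τ - t| * D) (𝓝 t) (𝓝 0) := by
    have h : Continuous fun τ : ℝ => |τ - t| * D := by fun_prop
    simpa using h.tendsto t
  have hlim : Tendsto (fun τ => c * m (cthickening (|τ - t| * D) K \ K)) (𝓝 t) (𝓝 0) := by
    simpa using ENNReal.Tendsto.const_mul
      ((tendsto_measure_cthickening_diff_of_isClosed hfin hK).comp hr) (Or.inr hc)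
  exact tendsto_of_tendsto_of_tendsto_of_le_of_le' tendsto_const_nhds hlim
    (Eventually.of_forall fun _ => zero_le) (eventually_of_mem hU hbound)

noncomputable def densityRatio (A : Set ℝ) (t ε : ℝ) : ℝ≥0∞ :=
  volume (A ∩ Ioo (t - ε) (t + ε)) / ENNReal.ofReal (2 * ε)

theorem volume_Ioo_sub_add (t ε : ℝ) :
    volume (Ioo (t - ε) (t + ε)) = ENNReal.ofReal (2 * ε) := by
  rw [Real.volume_Ioo]
  congr 1
  ring

theorem densityRatio_le_one (A : Set ℝ) (t ε : ℝ) : densityRatio A t ε ≤ 1 :=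
  ENNReal.div_le_of_le_mul <| by
    rw [one_mul, ← volume_Ioo_sub_add]
    exact measure_mono inter_subset_right

theorem toReal_densityRatio (A : Set ℝ) (t : ℝ) {ε : ℝ} (hε : 0 ≤ ε) :
    (densityRatio A t ε).toReal = (volume (A ∩ Ioo (t - ε) (t + ε))).toReal / (2 * ε) := by
  rw [densityRatio, ENNReal.toReal_div, ENNReal.toReal_ofReal (by positivity)]

theorem limsup_toReal_div_eq_one_of_limsup_densityRatio_eq_one {A : Set ℝ} {t : ℝ}
    {ε : ℕ → ℝ} (hε : ∀ n, 0 ≤ ε n) (h : limsup (fun n => densityRatio A t (ε n)) atTop = 1) :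
    limsup (fun n => (volume (A ∩ Ioo (t - ε n) (t + ε n))).toReal / (2 * ε n)) atTop = 1 := by
  simp_rw [← toReal_densityRatio A t (hε _)]
  rw [ENNReal.limsup_toReal_eq ENNReal.one_ne_top
    (Eventually.of_forall fun n => densityRatio_le_one A t (ε n)), h, ENNReal.toReal_one]

section Sections

variable {α β : Type*} [MeasurableSpace α] [MeasurableSpace β]

theorem mul_measure_le_lintegral_measure_section_inter (μ : Measure α) (ν : Measure β)
    [SFinite μ] [SFinite ν] {S : Set (α × β)} (hS : MeasurableSet S) {J : Set α}
    (hJ : MeasurableSet J) {c : ℝ≥0∞} (hc : ∀ a ∈ J, c ≤ ν {x | (a, x) ∈ S}) :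
    c * μ J ≤ ∫⁻ x, μ ({a | (a, x) ∈ S} ∩ J) ∂ν := by
  have hfubini : ∫⁻ x, μ ({a | (a, x) ∈ S} ∩ J) ∂ν = ∫⁻ a in J, ν {x | (a, x) ∈ S} ∂μ := by
    calc ∫⁻ x, μ ({a | (a, x) ∈ S} ∩ J) ∂ν
        = ∫⁻ x, μ.restrict J ((fun a => (a, x)) ⁻¹' S) ∂ν := by
          simp_rw [Measure.restrict_apply (hS.preimage measurable_prodMk_right)]
          rfl
      _ = ∫⁻ a in J, ν {x | (a, x) ∈ S} ∂μ := by
          rw [← Measure.prod_apply_symm hS, Measure.prod_apply hS]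
          rfl
  rw [hfubini, ← setLIntegral_const]
  exact setLIntegral_mono' hJ hc

theorem measurable_measure_section_inter (μ : Measure α) [SFinite μ] {S : Set (α × β)}
    (hS : MeasurableSet S) {J : Set α} (hJ : MeasurableSet J) :
    Measurable fun x => μ ({a | (a, x) ∈ S} ∩ J) :=
  measurable_measure_prodMk_right (hS.inter (hJ.preimage measurable_fst))

theorem measurable_densityRatio_section {S : Set (ℝ × β)} (hS : MeasurableSet S) (t ε : ℝ) :
    Measurable fun x => densityRatio {τ | (τ, x) ∈ S} t ε :=
  (measurable_measure_section_inter volume hS measurableSet_Ioo).div_const _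

theorem ae_limsup_eq_one_of_le_limsup_lintegral {ν : Measure β} [IsFiniteMeasure ν]
    {F : ℕ → β → ℝ≥0∞} (hF : ∀ n, Measurable (F n)) (hF1 : ∀ n x, F n x ≤ 1)
    (hlim : ν univ ≤ limsup (fun n => ∫⁻ x, F n x ∂ν) atTop) :
    ∀ᵐ x ∂ν, limsup (fun n => F n x) atTop = 1 := by
  have hle : ∀ x, limsup (fun n => F n x) atTop ≤ 1 := fun x =>
    limsup_le_of_le (by isBoundedDefault) (Eventually.of_forall (hF1 · x))
  refine ae_eq_of_ae_le_of_lintegral_le (ae_of_all ν hle) ?_ aemeasurable_const ?_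
  · exact ne_top_of_le_ne_top (by simp) (lintegral_mono hle)
  calc ∫⁻ _, 1 ∂ν = ν univ := lintegral_one
    _ ≤ limsup (fun n => ∫⁻ x, F n x ∂ν) atTop := hlim
    _ ≤ ∫⁻ x, limsup (fun n => F n x) atTop ∂ν :=
      limsup_lintegral_le 1 hF (fun n => ae_of_all _ (hF1 n)) (by simp)

variable {ν : Measure β} [IsFiniteMeasure ν] {S : Set (ℝ × β)} {t : ℝ} {ε : ℕ → ℝ}

theorem le_liminf_lintegral_densityRatio_section (hS : MeasurableSet S)
    (hSt : Tendsto (fun τ => ν {x | (τ, x) ∉ S}) (𝓝 t) (𝓝 0))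
    (hε : ∀ n, 0 < ε n) (hε0 : Tendsto ε atTop (𝓝 0)) :
    ν univ ≤ liminf (fun n => ∫⁻ x, densityRatio {τ | (τ, x) ∈ S} t (ε n) ∂ν) atTop := by
  refine ENNReal.le_of_forall_pos_le_add fun δ hδ _ => ?_
  rw [← tsub_le_iff_right]
  refine le_liminf_of_le (by isBoundedDefault) ?_
  obtain ⟨ρ, hρ, hball⟩ := Metric.eventually_nhds_iff_ball.1
    (hSt.eventually (ge_mem_nhds (by exact_mod_cast hδ : (0 : ℝ≥0∞) < δ)))
  filter_upwards [hε0.eventually (gt_mem_nhds hρ)] with n hn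
  have hc : ∀ τ ∈ Ioo (t - ε n) (t + ε n), ν univ - δ ≤ ν {x | (τ, x) ∈ S} := by
    intro τ ⟨hτl, hτr⟩
    have hτ : τ ∈ ball t ρ := by
      rw [mem_ball, Real.dist_eq, abs_sub_lt_iff]
      constructor <;> linarith
    rw [tsub_le_iff_right]
    exact (measure_univ_le_add_compl _).trans (add_le_add le_rfl (hball τ hτ))
  have hvol : ENNReal.ofReal (2 * ε n) ≠ 0 := by simpa using hε n
  calc ν univ - δ
      = (ν univ - δ) * ENNReal.ofReal (2 * ε n) / ENNReal.ofReal (2 * ε n) :=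
        (ENNReal.mul_div_cancel_right hvol ENNReal.ofReal_ne_top).symm
    _ ≤ (∫⁻ x, volume ({τ | (τ, x) ∈ S} ∩ Ioo (t - ε n) (t + ε n)) ∂ν) /
          ENNReal.ofReal (2 * ε n) := by
        rw [← volume_Ioo_sub_add]
        gcongr
        exact mul_measure_le_lintegral_measure_section_inter volume ν hS measurableSet_Ioo hc
    _ = ∫⁻ x, densityRatio {τ | (τ, x) ∈ S} t (ε n) ∂ν := by
        simp_rw [densityRatio, div_eq_mul_inv]
        exact (lintegral_mul_const _ (measurable_measure_section_inter volume hS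
          measurableSet_Ioo)).symm

theorem ae_limsup_densityRatio_section_eq_one (hS : MeasurableSet S)
    (hSt : Tendsto (fun τ => ν {x | (τ, x) ∉ S}) (𝓝 t) (𝓝 0))
    (hε : ∀ n, 0 < ε n) (hε0 : Tendsto ε atTop (𝓝 0)) :
    ∀ᵐ x ∂ν, limsup (fun n => densityRatio {τ | (τ, x) ∈ S} t (ε n)) atTop = 1 :=
  ae_limsup_eq_one_of_le_limsup_lintegral (fun n => measurable_densityRatio_section hS t (ε n))
    (fun n x => densityRatio_le_one _ t (ε n))
    ((le_liminf_lintegral_densityRatio_section hS hSt hε hε0).trans liminf_le_limsup)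

end Sections

theorem self_intersection_ae_limsup_along_sequences_general
    {X : Type*} [MetricSpace X]
    [MeasurableSpace X] [BorelSpace X]
    (m : MeasureTheory.Measure X)
    [MeasurableSpace C(unitInterval, X)] [BorelSpace C(unitInterval, X)]
    (P : MeasureTheory.Measure C(unitInterval, X)) [IsProbabilityMeasure P]
    (G : Set C(unitInterval, X))
    (hGcpt : IsCompact G) (hGgeo : ∀ γ ∈ G, IsCSGeodesic γ)
    (t : ℝ) (ht : t ∈ Set.Ioo (0 : ℝ) 1)
    (C : ℝ)
    (U : Set ℝ) (hUnhds : U ∈ nhdsWithin t (Set.Icc (0 : ℝ) 1))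
    (hdens : ∀ τ ∈ U, ∀ A : Set X, MeasurableSet A →
      MeasureTheory.Measure.map (ev τ) P A ≤ ENNReal.ofReal C * m A)
    (ε₀ : ℝ) (hε₀ : 0 < ε₀)
    (hfin : m (Metric.cthickening ε₀ (ev t '' G)) < ⊤) :
    ∀ ε : ℕ → ℝ, (∀ n, 0 < ε n) → Filter.Tendsto ε Filter.atTop (nhds 0) →
      ∃ H ⊆ G, P H = 0 ∧ ∀ γ ∈ G \ H,
        Filter.limsup
          (fun n : ℕ => (MeasureTheory.volume
              ({τ : ℝ | τ ∈ Set.Icc (0 : ℝ) 1 ∧ ev τ γ ∈ ev t '' G} ∩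
                Set.Ioo (t - ε n) (t + ε n))).toReal / (2 * ε n))
          Filter.atTop = 1 := by
  intro ε hε hε0
  have hIcc : Icc (0 : ℝ) 1 ∈ 𝓝 t := Icc_mem_nhds ht.1 ht.2
  set S : Set (ℝ × C(unitInterval, X)) := {p | p.1 ∈ Icc 0 1 ∧ ev p.1 p.2 ∈ ev t '' G}
  have hS : MeasurableSet S := by
    have hev : Continuous fun p : ℝ × C(unitInterval, X) => ev p.1 p.2 :=
      continuous_eval.comp (continuous_snd.prodMk
        ((continuous_projIcc (h := zero_le_one)).comp continuous_fst))
    exact ((isClosed_Icc.preimage continuous_fst).inter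
      ((hGcpt.image (continuous_eval_const _)).isClosed.preimage hev)).measurableSet
  have hSt : Tendsto (fun τ => P.restrict G {γ | (τ, γ) ∉ S}) (𝓝 t) (𝓝 0) := by
    refine (tendsto_restrict_measure_ev_notMem_image m P hGcpt hGgeo
      (nhdsWithin_eq_nhds.2 hIcc ▸ hUnhds) ENNReal.ofReal_ne_top hdens
      ⟨ε₀, hε₀, hfin.ne⟩).congr' ?_
    filter_upwards [hIcc] with τ hτ
    simp only [S, mem_ofPred_eq, hτ, true_and]
  have hae := (ae_restrict_iff' hGcpt.isClosed.measurableSet).1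
    (ae_limsup_densityRatio_section_eq_one hS hSt hε hε0)
  refine ⟨_, fun γ hγ => (Classical.not_imp.1 hγ).1, ae_iff.1 hae, fun γ ⟨hγG, hγH⟩ => ?_⟩
  exact limsup_toReal_div_eq_one_of_limsup_densityRatio_eq_one (fun n => (hε n).le)
    (not_not.1 hγH hγG)

/-- Under the bounded-density assumption near `t ∈ (0,1)`, for every
sequence `εₙ → 0⁺` there is a `P`-null set `H ⊆ G` (depending on the sequence) such that
for every `γ ∈ G \ H`,
`limsup_n ℒ¹(I_t(γ) ∩ (t - εₙ, t + εₙ)) / (2εₙ) = 1`. -/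
theorem self_intersection_ae_limsup_along_sequences
    {X : Type*} [MetricSpace X] [CompleteSpace X] [TopologicalSpace.SeparableSpace X]
    [MeasurableSpace X] [BorelSpace X]
    (m : MeasureTheory.Measure X)
    [MeasurableSpace C(unitInterval, X)] [BorelSpace C(unitInterval, X)]
    (P : MeasureTheory.Measure C(unitInterval, X)) [IsProbabilityMeasure P]
    (G : Set C(unitInterval, X)) (hGsupp : G = mSupport P)
    (hGcpt : IsCompact G) (hGgeo : ∀ γ ∈ G, IsCSGeodesic γ)
    (t : ℝ) (ht : t ∈ Set.Ioo (0 : ℝ) 1)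
    (C : ℝ) (hC : 0 < C)
    (U : Set ℝ) (hUsub : U ⊆ Set.Icc (0 : ℝ) 1) (hUnhds : U ∈ nhdsWithin t (Set.Icc (0 : ℝ) 1))
    (hdens : ∀ τ ∈ U, ∀ A : Set X, MeasurableSet A →
      MeasureTheory.Measure.map (ev τ) P A ≤ ENNReal.ofReal C * m A)
    (ε₀ : ℝ) (hε₀ : 0 < ε₀)
    (hfin : m (Metric.cthickening ε₀ (ev t '' G)) < ⊤) :
    ∀ ε : ℕ → ℝ, (∀ n, 0 < ε n) → Filter.Tendsto ε Filter.atTop (nhds 0) →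
      ∃ H ⊆ G, P H = 0 ∧ ∀ γ ∈ G \ H,
        Filter.limsup
          (fun n : ℕ => (MeasureTheory.volume
              ({τ : ℝ | τ ∈ Set.Icc (0 : ℝ) 1 ∧ ev τ γ ∈ ev t '' G} ∩
                Set.Ioo (t - ε n) (t + ε n))).toReal / (2 * ε n))
          Filter.atTop = 1 :=
  self_intersection_ae_limsup_along_sequences_general m P G hGcpt hGgeo t ht C U hUnhds hdens ε₀ hε₀
    hfin
end
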